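/- arXiv:2210.13627 — 2 statements merged into one kernel-verified Lean document; each statement's English description precedes it below -/
import Mathlib

section
/- Let s>0 and integers 1≤k≤n. With h_s(j) = ψ(j+2s) − ψ(2s) and φ_s(k,n) = (1/k)·Γ(n+1)Γ(n-k+2s)/(Γ(n-k+1)Γ(n+2s)), one has Σ_{l=0}^k (−1)^{k-l} binom(n,l) binom(n-l,k-l) h_s(n−l) = −φ_s(k,n). -/
noncomputable section

namespace HeatModel

/-- The digamma function `ψ = Γ'/Γ`. -/
def digamma (x : ℝ) : ℝ := deriv Real.Gamma x / Real.Gamma x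

/-- The cumulative rate function `h_s(j) = ψ(j+2s) − ψ(2s)`. -/
def hRate (s : ℝ) (j : ℕ) : ℝ := digamma ((j : ℝ) + 2 * s) - digamma (2 * s)

/-- The jump rates `φ_s(k,n)` of the harmonic dual process (for `1 ≤ k ≤ n`). -/
def phiRate (s : ℝ) (k n : ℕ) : ℝ :=
  (1 / (k : ℝ)) * (Real.Gamma ((n : ℝ) + 1) * Real.Gamma ((n : ℝ) - (k : ℝ) + 2 * s)) /
    (Real.Gamma ((n : ℝ) - (k : ℝ) + 1) * Real.Gamma ((n : ℝ) + 2 * s))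

/-!
After `binom(n,l) binom(n-l,k-l) = binom(n,k) binom(k,l)` the left side is
`(-1)^k binom(n,k) Δ^k h_s (n-k)` for the forward difference `Δ`. The functional equation
`ψ(x+1) = ψ(x) + 1/x` gives `Δ h_s (j) = 1/(2s+j)`, and the `(k-1)`-st forward difference of
`j ↦ 1/(x+j)` is `(-1)^(k-1) (k-1)! / x^(k̄)` (rising factorial). On the other side
`Γ(x+k) = Γ(x) x^(k̄)` turns `φ_s(k,n)` into `binom(n,k) (k-1)! / (n-k+2s)^(k̄)`.
-/

open Finset Polynomial
open scoped Nat fwdDiff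

theorem _root_.Real.Gamma_add_nat_eq_mul_ascPochhammer {x : ℝ} (hx : ∀ m : ℕ, x ≠ -m) (n : ℕ) :
    Real.Gamma (x + n) = Real.Gamma x * (ascPochhammer ℝ n).eval x := by
  induction n with
  | zero => simp
  | succ n ih =>
    have hxn : x + n ≠ 0 := fun h ↦ hx n (eq_neg_of_add_eq_zero_left h)
    rw [Nat.cast_succ, ← add_assoc, Real.Gamma_add_one hxn, ih, ascPochhammer_succ_eval]
    ring

theorem digamma_add_one {x : ℝ} (hx : ∀ m : ℕ, x ≠ -m) :
    digamma (x + 1) = digamma x + x⁻¹ := by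
  have hx0 : x ≠ 0 := by simpa using hx 0
  have hshift : (fun y ↦ Real.Gamma (y + 1)) =ᶠ[nhds x] fun y ↦ y * Real.Gamma y := by
    filter_upwards [isOpen_ne.mem_nhds hx0] with y hy
    exact Real.Gamma_add_one hy
  have hderiv : deriv Real.Gamma (x + 1) = Real.Gamma x + x * deriv Real.Gamma x := by
    rw [← deriv_comp_add_const, hshift.deriv_eq]
    exact ((hasDerivAt_id' x).mul (Real.differentiableAt_Gamma hx).hasDerivAt).deriv.trans (by ring)
  rw [digamma, digamma, hderiv, Real.Gamma_add_one hx0]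
  field_simp [Real.Gamma_ne_zero hx]
  ring

theorem fwdDiff_hRate {s : ℝ} (hs : 0 < s) :
    Δ_[1] (hRate s) = fun j : ℕ ↦ (2 * s + j)⁻¹ := by
  funext j
  have hj : ∀ m : ℕ, (j : ℝ) + 2 * s ≠ -m := fun m ↦ by
    have : (0 : ℝ) ≤ j + m := by positivity
    intro h; linarith
  simp only [fwdDiff, hRate, Nat.cast_add, Nat.cast_one, add_right_comm _ (1 : ℝ),
    digamma_add_one hj]
  ring

section Pochhammer

variable {K : Type*} [Field K] {z : K}

theorem ascPochhammer_eval_ne_zero (hz : ∀ m : ℕ, z + m ≠ 0) (n : ℕ) :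
    (ascPochhammer K n).eval z ≠ 0 := fun h ↦ by
  obtain ⟨m, -, hm⟩ := (ascPochhammer_eval_eq_zero_iff n z).mp h
  exact hz m (by rw [hm, add_neg_cancel])

theorem inv_ascPochhammer_eval_add_one_sub_inv (hz : ∀ m : ℕ, z + m ≠ 0) (n : ℕ) :
    ((ascPochhammer K (n + 1)).eval (z + 1))⁻¹ - ((ascPochhammer K (n + 1)).eval z)⁻¹ =
      -(n + 1) / (ascPochhammer K (n + 2)).eval z := by
  have hz1 : ∀ m : ℕ, z + 1 + m ≠ 0 := fun m ↦ by
    simpa [add_assoc, add_comm (1 : K)] using hz (m + 1)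
  have hleft : (ascPochhammer K (n + 2)).eval z =
      z * (ascPochhammer K (n + 1)).eval (z + 1) := by
    rw [ascPochhammer_succ_left, eval_mul, eval_comp]
    simp
  have hright : (ascPochhammer K (n + 2)).eval z =
      (ascPochhammer K (n + 1)).eval z * (z + (n + 1)) := by
    rw [ascPochhammer_succ_eval]
    push_cast
    rfl
  field_simp [ascPochhammer_eval_ne_zero hz, ascPochhammer_eval_ne_zero hz1]
  linear_combination (ascPochhammer K (n + 1)).eval z * hleft -
    (ascPochhammer K (n + 1)).eval (z + 1) * hright

theorem fwdDiff_iter_inv_natCast_add {x : K} (hx : ∀ m : ℕ, x + m ≠ 0) (k y : ℕ) :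
    (Δ_[1])^[k] (fun j : ℕ ↦ (x + j)⁻¹) y =
      (-1) ^ k * k ! / (ascPochhammer K (k + 1)).eval (x + y) := by
  induction k generalizing y with
  | zero => simp
  | succ k ih =>
    have hxy : ∀ m : ℕ, x + y + m ≠ 0 := fun m ↦ by simpa [add_assoc] using hx (y + m)
    rw [Function.iterate_succ_apply', fwdDiff, ih, ih, Nat.cast_add_one, ← add_assoc,
      mul_div_assoc, mul_div_assoc, ← mul_sub, div_eq_mul_inv, div_eq_mul_inv, ← mul_sub,
      inv_ascPochhammer_eval_add_one_sub_inv hxy, Nat.factorial_succ]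
    push_cast
    ring

end Pochhammer

theorem sum_alternating_choose_mul_sub_eq_fwdDiff_iter {R : Type*} [CommRing R] (f : ℕ → R)
    {k n : ℕ} (hkn : k ≤ n) :
    ∑ l ∈ range (k + 1), (-1) ^ (k - l) * (k.choose l : R) * f (n - l) =
      (-1) ^ k * (Δ_[1])^[k] f (n - k) := by
  rw [fwdDiff_iter_eq_sum_shift, mul_sum, ← sum_range_reflect]
  refine sum_congr rfl fun l hl ↦ ?_
  have hlk : l ≤ k := Nat.lt_succ_iff.mp (mem_range.mp hl)
  have hsign : (-1 : R) ^ l = (-1) ^ k * (-1) ^ (k - l) := by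
    rw [← pow_add, show k + (k - l) = l + 2 * (k - l) by omega, pow_add, pow_mul, neg_one_sq,
      one_pow, mul_one]
  rw [Nat.add_sub_cancel, Nat.sub_sub_self hlk, Nat.choose_symm hlk, nsmul_one, Nat.cast_id,
    show n - (k - l) = n - k + l by omega, zsmul_eq_mul, hsign]
  push_cast
  ring

theorem phiRate_add_one {s : ℝ} (hs : 0 < s) {k n : ℕ} (hkn : k + 1 ≤ n) :
    phiRate s (k + 1) n =
      n.choose (k + 1) * k ! / (ascPochhammer ℝ (k + 1)).eval (2 * s + (n - (k + 1) : ℕ)) := by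
  obtain ⟨a, rfl⟩ := Nat.exists_eq_add_of_le hkn
  have hx : ∀ m : ℕ, 2 * s + a ≠ -m := fun m ↦ by
    have : 0 < 2 * s + a + m := by positivity
    linarith
  have hΓ : Real.Gamma (((k + 1 + a : ℕ) : ℝ) + 2 * s) =
      Real.Gamma (2 * s + a) * (ascPochhammer ℝ (k + 1)).eval (2 * s + a) := by
    rw [← Real.Gamma_add_nat_eq_mul_ascPochhammer hx]
    push_cast
    ring_nf
  have hfac := Nat.choose_mul_factorial_mul_factorial hkn
  rw [Nat.add_sub_cancel_left] at hfac
  rw [phiRate, Nat.add_sub_cancel_left, show ((k + 1 + a : ℕ) : ℝ) - (k + 1 : ℕ) = a by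
    push_cast; ring, Real.Gamma_nat_eq_factorial, Real.Gamma_nat_eq_factorial, hΓ, add_comm (a : ℝ)]
  field_simp [Real.Gamma_ne_zero hx]
  rw [← hfac, Nat.factorial_succ]
  push_cast
  ring

/-- The binomial identity relating the cumulative rate `h_s` and the jump rates `φ_s`:
`Σ_{l=0}^k (−1)^{k−l} binom(n,l) binom(n−l,k−l) h_s(n−l) = −φ_s(k,n)`. -/
theorem binomial_rate_identity (s : ℝ) (hs : 0 < s) (k n : ℕ) (hk : 1 ≤ k) (hkn : k ≤ n) :
    (∑ l ∈ Finset.range (k + 1),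
        (-1 : ℝ) ^ (k - l) * (Nat.choose n l : ℝ) * (Nat.choose (n - l) (k - l) : ℝ) *
          hRate s (n - l))
    = -phiRate s k n := by
  obtain ⟨k, rfl⟩ := Nat.exists_eq_add_of_le' hk
  have hx : ∀ m : ℕ, 2 * s + m ≠ 0 := fun m ↦ by positivity
  calc _ = n.choose (k + 1) * ∑ l ∈ range (k + 2),
          (-1 : ℝ) ^ (k + 1 - l) * ((k + 1).choose l : ℝ) * hRate s (n - l) := by
        rw [mul_sum]
        refine sum_congr rfl fun l hl ↦ ?_
        have h : (n.choose (k + 1) * (k + 1).choose l : ℝ) =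
            n.choose l * (n - l).choose (k + 1 - l) := mod_cast Nat.choose_mul (Nat.lt_succ_iff.mp (mem_range.mp hl))
        linear_combination -((-1) ^ (k + 1 - l) * hRate s (n - l)) * h
    _ = n.choose (k + 1) * ((-1) ^ (k + 1) *
          (Δ_[1])^[k] (fun j : ℕ ↦ (2 * s + j)⁻¹) (n - (k + 1))) := by
        rw [sum_alternating_choose_mul_sub_eq_fwdDiff_iter _ hkn, Function.iterate_succ_apply,
          fwdDiff_hRate hs]
    _ = -phiRate s (k + 1) n := by
        have hsign : (-1 : ℝ) ^ (k + 1) * (-1) ^ k = -1 := by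
          rw [← pow_add]
          exact Odd.neg_one_pow ⟨k, by ring⟩
        rw [fwdDiff_iter_inv_natCast_add hx, phiRate_add_one hs hkn]
        linear_combination (n.choose (k + 1) * k ! /
          (ascPochhammer ℝ (k + 1)).eval (2 * s + (n - (k + 1) : ℕ))) * hsign

end HeatModel
end
end

section
/- Let s>0, y_1>0, y_2>0 and let f: ℝ² → ℝ be a polynomial. Then as (a,b) → (0⁺, 2s), the integral ∫_0^1 u^{a-1}(1-u)^{b-1}[f(y_1 − y_1 u, y_2 + y_1 u) − f(y_1,y_2)] du converges to ∫_0^{y_1} α^{-1}(1-α/y_1)^{2s-1}[f(y_1-α, y_2+α) − f(y_1,y_2)] dα. -/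
/-!
`u ↦ f(y₁ - y₁ u, y₂ + y₁ u) - f(y₁, y₂)` is a polynomial without constant term, hence equals
`u · y₁ R(y₁ u)` for a polynomial `R`. The factor `u` shifts the first Beta exponent, turning the
integral into `∫₀¹ u^a (1-u)^(b-1) y₁ R(y₁ u) du`. This Beta transform of a bounded function is
continuous on the open quadrant by dominated convergence against a Beta density with halved
parameters, and its value at `(a, b) = (0, 2s)` is the Lévy integral after substituting `α = y₁ u`.
-/

open MeasureTheory Filter Set Topology

theorem MvPolynomial.exists_eval_add_smul_sub_eval_eq_mul {R σ : Type*} [CommRing R]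
    (p : MvPolynomial σ R) (x v : σ → R) :
    ∃ r : Polynomial R, ∀ t : R, eval (x + t • v) p - eval x p = t * r.eval t := by
  set line : σ → Polynomial R := fun i => Polynomial.C (x i) + Polynomial.X * Polynomial.C (v i)
  set q : Polynomial R := aeval line p
  have hq : ∀ t, q.eval t = eval (x + t • v) p := fun t => by
    have := AlgHom.congr_fun (comp_aeval line (Polynomial.aeval t)) p
    simp only [AlgHom.comp_apply, Polynomial.coe_aeval_eq_eval] at this
    have hpt : (fun i => (line i).eval t) = x + t • v := by
      funext i
      simp only [line, Polynomial.eval_add, Polynomial.eval_mul, Polynomial.eval_C,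
        Polynomial.eval_X, Pi.add_apply, Pi.smul_apply, smul_eq_mul]
    rw [this, hpt]
    rfl
  obtain ⟨r, hr⟩ : Polynomial.X ∣ q - Polynomial.C (eval x p) := by
    rw [Polynomial.X_dvd_iff, Polynomial.coeff_zero_eq_eval_zero]
    simp [hq]
  refine ⟨r, fun t => ?_⟩
  simpa [hq] using congr_arg (Polynomial.eval t) hr

theorem integrableOn_rpow_mul_one_sub_rpow {a b : ℝ} (ha : 0 < a) (hb : 0 < b) :
    IntegrableOn (fun u : ℝ => u ^ (a - 1) * (1 - u) ^ (b - 1)) (Ioo 0 1) := by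
  have hC := (Complex.betaIntegral_convergent (u := a) (v := b) (by simpa) (by simpa)).norm
  rw [intervalIntegrable_iff_integrableOn_Ioo_of_le zero_le_one] at hC
  refine hC.congr_fun (fun u hu => ?_) measurableSet_Ioo
  have h1u : 0 < 1 - u := sub_pos.2 hu.2
  change ‖_‖ = _
  have hcast : (1 : ℂ) - u = ((1 - u : ℝ) : ℂ) := by push_cast; rfl
  rw [norm_mul, Complex.norm_cpow_eq_rpow_re_of_pos hu.1, hcast,
    Complex.norm_cpow_eq_rpow_re_of_pos h1u]
  simp

theorem continuousAt_integral_rpow_mul_one_sub_rpow_mul {r : ℝ → ℝ}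
    (hr : AEStronglyMeasurable r (volume.restrict (Ioo 0 1))) {C : ℝ}
    (hC : ∀ u ∈ Ioo (0 : ℝ) 1, ‖r u‖ ≤ C) {a b : ℝ} (ha : 0 < a) (hb : 0 < b) :
    ContinuousAt (fun ab : ℝ × ℝ => ∫ u in Ioo 0 1, u ^ (ab.1 - 1) * (1 - u) ^ (ab.2 - 1) * r u)
      (a, b) := by
  have hnear : Ioi (a / 2) ×ˢ Ioi (b / 2) ∈ 𝓝 (a, b) :=
    prod_mem_nhds (Ioi_mem_nhds (by linarith)) (Ioi_mem_nhds (by linarith))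
  refine tendsto_integral_filter_of_dominated_convergence
    (fun u => C * (u ^ (a / 2 - 1) * (1 - u) ^ (b / 2 - 1))) ?_ ?_
    ((integrableOn_rpow_mul_one_sub_rpow (half_pos ha) (half_pos hb)).const_mul C) ?_
  · refine Eventually.of_forall fun ab => AEStronglyMeasurable.mul ?_ hr
    refine ContinuousOn.aestronglyMeasurable ?_ measurableSet_Ioo
    exact ContinuousOn.mul
      (continuousOn_id.rpow_const fun u hu => Or.inl hu.1.ne')
      ((continuousOn_const.sub continuousOn_id).rpow_const fun u hu => Or.inl (sub_pos.2 hu.2).ne')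
  · filter_upwards [hnear] with ab ⟨hab₁, hab₂⟩
    refine (ae_restrict_iff' measurableSet_Ioo).2 (Eventually.of_forall fun u ⟨hu0, hu1⟩ => ?_)
    have h1u : 0 < 1 - u := sub_pos.2 hu1
    have hua : u ^ (ab.1 - 1) ≤ u ^ (a / 2 - 1) :=
      Real.rpow_le_rpow_of_exponent_ge hu0 hu1.le (by linarith [mem_Ioi.1 hab₁])
    have hub : (1 - u) ^ (ab.2 - 1) ≤ (1 - u) ^ (b / 2 - 1) :=
      Real.rpow_le_rpow_of_exponent_ge h1u (by linarith) (by linarith [mem_Ioi.1 hab₂])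
    rw [norm_mul, Real.norm_of_nonneg (by positivity), mul_comm C]
    exact mul_le_mul (mul_le_mul hua hub (by positivity) (by positivity)) (hC u ⟨hu0, hu1⟩)
      (norm_nonneg _) (by positivity)
  · refine (ae_restrict_iff' measurableSet_Ioo).2 (Eventually.of_forall fun u ⟨hu0, hu1⟩ => ?_)
    have h1u : 0 < 1 - u := sub_pos.2 hu1
    exact Continuous.tendsto (by fun_prop (disch := positivity)) _

theorem setIntegral_Ioo_zero_eq_smul_comp_mul_left {E : Type*} [NormedAddCommGroup E]
    [NormedSpace ℝ E] (f : ℝ → E) {c : ℝ} (hc : 0 < c) :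
    ∫ x in Ioo 0 c, f x = c • ∫ u in Ioo 0 1, f (c * u) := by
  rw [← integral_Ioc_eq_integral_Ioo, ← integral_Ioc_eq_integral_Ioo,
    ← intervalIntegral.integral_of_le hc.le, ← intervalIntegral.integral_of_le zero_le_one,
    intervalIntegral.integral_comp_mul_left f hc.ne', smul_inv_smul₀ hc.ne', mul_zero, mul_one]

namespace HeatModel

theorem beta_redistribution_limit_general (s : ℝ) (hs : 0 < s) (y₁ y₂ : ℝ) (h₁ : 0 < y₁)
    (p : MvPolynomial (Fin 2) ℝ) :
    Filter.Tendsto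
      (fun ab : ℝ × ℝ =>
        ∫ u in Set.Ioo (0 : ℝ) 1,
          u ^ (ab.1 - 1) * (1 - u) ^ (ab.2 - 1) *
            (MvPolynomial.eval ![y₁ - y₁ * u, y₂ + y₁ * u] p - MvPolynomial.eval ![y₁, y₂] p))
      ((nhdsWithin (0 : ℝ) (Set.Ioi 0)) ×ˢ (nhds (2 * s)))
      (nhds
        (∫ a in Set.Ioo 0 y₁,
          a⁻¹ * (1 - a / y₁) ^ (2 * s - 1) *
            (MvPolynomial.eval ![y₁ - a, y₂ + a] p - MvPolynomial.eval ![y₁, y₂] p))) := by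
  obtain ⟨r, hr⟩ := p.exists_eval_add_smul_sub_eval_eq_mul ![y₁, y₂] ![-1, 1]
  have hline : ∀ t : ℝ, ![y₁ - t, y₂ + t] = ![y₁, y₂] + t • ![-1, 1] := fun t => by
    ext i; fin_cases i <;> simp [sub_eq_add_neg]
  set R : ℝ → ℝ := fun u => y₁ * r.eval (y₁ * u)
  have hR : Continuous R := by fun_prop
  obtain ⟨C, hC⟩ := isCompact_Icc.exists_bound_of_continuousOn (hR.continuousOn (s := Icc 0 1))
  have hlim := continuousAt_integral_rpow_mul_one_sub_rpow_mul hR.aestronglyMeasurable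
    (fun u hu => hC u (Ioo_subset_Icc_self hu)) one_pos (by positivity : (0 : ℝ) < 2 * s)
  have hshift : Tendsto (Prod.map (· + 1) id) (𝓝[>] (0 : ℝ) ×ˢ 𝓝 (2 * s)) (𝓝 (1, 2 * s)) := by
    rw [nhds_prod_eq]
    exact ((continuous_add_const 1).tendsto' 0 1 (zero_add 1)).mono_left nhdsWithin_le_nhds
      |>.prodMap tendsto_id
  convert hlim.tendsto.comp hshift using 2
  · refine setIntegral_congr_fun measurableSet_Ioo fun u ⟨hu0, _⟩ => ?_
    simp only [Prod.map_fst, Prod.map_snd, id, R, hline, hr, add_sub_cancel_right]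
    rw [Real.rpow_sub_one hu0.ne']
    field_simp
  · rw [setIntegral_Ioo_zero_eq_smul_comp_mul_left _ h₁, smul_eq_mul, ← integral_const_mul]
    refine setIntegral_congr_fun measurableSet_Ioo fun u ⟨hu0, _⟩ => ?_
    simp only [hline, hr, R]
    rw [mul_div_cancel_left₀ _ h₁.ne', sub_self, Real.rpow_zero]
    field_simp

/-- The rightward Levy bulk generator of the integrable heat conduction model arises as the
limit, for `(a,b) → (0⁺, 2s)`, of the (Beta-function normalized) Beta(a,b)-redistribution
generator of the immediate exchange model, on polynomial functions. -/
theorem beta_redistribution_limit (s : ℝ) (hs : 0 < s) (y₁ y₂ : ℝ) (h₁ : 0 < y₁)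
    (h₂ : 0 < y₂) (p : MvPolynomial (Fin 2) ℝ) :
    Filter.Tendsto
      (fun ab : ℝ × ℝ =>
        ∫ u in Set.Ioo (0 : ℝ) 1,
          u ^ (ab.1 - 1) * (1 - u) ^ (ab.2 - 1) *
            (MvPolynomial.eval ![y₁ - y₁ * u, y₂ + y₁ * u] p - MvPolynomial.eval ![y₁, y₂] p))
      ((nhdsWithin (0 : ℝ) (Set.Ioi 0)) ×ˢ (nhds (2 * s)))
      (nhds
        (∫ a in Set.Ioo 0 y₁,
          a⁻¹ * (1 - a / y₁) ^ (2 * s - 1) *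
            (MvPolynomial.eval ![y₁ - a, y₂ + a] p - MvPolynomial.eval ![y₁, y₂] p))) :=
  beta_redistribution_limit_general s hs y₁ y₂ h₁ p

end HeatModel
end
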